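/- Given a regular finitely additive probability function P with values in a non-Archimedean ordered field extension of ℝ, the function C(B, A) = st(P(B ∩ A)/P(A)) for nonempty A satisfies: C(A, A) = 1, and for each nonempty A the map B ↦ C(B, A) is a finitely additive probability measure on subsets of Ω with values in [0,1] ⊆ ℝ. -/

import Mathlib

/-!
Write `x B = P (B ∩ A) / P A`. Finite additivity and regularity make `x` a finitely additive
`K`-valued function with `x A = 1` and values in `[0, 1]`, so every `x B` is finite and `C B A`
is its standard part. Taking standard parts is monotone and additive, and it fixes the image of
`ℝ`, so these properties pass to `C (·) A`.
-/

section StandardPart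

variable {K : Type*} [Field K] [LinearOrder K] {ι : ℝ →+* K}

def IsStandardPart (ι : ℝ →+* K) (x : K) (r : ℝ) : Prop :=
  ∀ ε : ℝ, 0 < ε → |x - ι r| < ι ε

theorem isStandardPart_of_forall_nat (hι : Monotone ι) {x : K} {r : ℝ}
    (h : ∀ m : ℕ, 0 < m → |x - ι r| < ι (1 / m)) : IsStandardPart ι x r := by
  intro ε hε
  obtain ⟨n, hn⟩ := exists_nat_one_div_lt hε
  calc |x - ι r| < ι (1 / (n + 1 : ℕ)) := h (n + 1) n.succ_pos
    _ ≤ ι ε := hι (by exact_mod_cast hn.le)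

theorem isStandardPart_map [IsStrictOrderedRing K] (hι : StrictMono ι) (r : ℝ) :
    IsStandardPart ι (ι r) r := by
  intro ε hε
  rw [sub_self, abs_zero, ← map_zero ι]
  exact hι hε

theorem IsStandardPart.add [IsStrictOrderedRing K] {x y : K} {r s : ℝ}
    (hx : IsStandardPart ι x r) (hy : IsStandardPart ι y s) : IsStandardPart ι (x + y) (r + s) := by
  intro ε hε
  calc |x + y - ι (r + s)| = |(x - ι r) + (y - ι s)| := by rw [map_add]; ring_nf
    _ ≤ |x - ι r| + |y - ι s| := abs_add_le _ _
    _ < ι (ε / 2) + ι (ε / 2) := add_lt_add (hx _ (half_pos hε)) (hy _ (half_pos hε))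
    _ = ι ε := by rw [← map_add, add_halves]

theorem IsStandardPart.mono [IsStrictOrderedRing K] {x y : K} {r s : ℝ}
    (hx : IsStandardPart ι x r) (hy : IsStandardPart ι y s) (hxy : x ≤ y) : r ≤ s := by
  by_contra! hsr
  set ε := (r - s) / 2
  have hε : 0 < ε := half_pos (sub_pos.mpr hsr)
  have hlow : ι (r - ε) < x := by
    have := (abs_sub_lt_iff.mp (hx ε hε)).2
    rw [map_sub]
    linarith
  have hhigh : y < ι (s + ε) := by
    have := (abs_sub_lt_iff.mp (hy ε hε)).1
    rw [map_add]
    linarith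
  have hmid : s + ε = r - ε := by ring
  rw [hmid] at hhigh
  exact (hlow.trans_le hxy).trans hhigh |>.false

theorem IsStandardPart.unique [IsStrictOrderedRing K] {x : K} {r s : ℝ}
    (hr : IsStandardPart ι x r) (hs : IsStandardPart ι x s) : r = s :=
  le_antisymm (hr.mono hs le_rfl) (hs.mono hr le_rfl)

end StandardPart

section FinitelyAdditive

variable {Ω M : Type*} [AddCommGroup M] [PartialOrder M] [IsOrderedAddMonoid M]
  {P : Set Ω → M}

theorem empty_eq_zero_of_additive
    (hadd : ∀ A B : Set Ω, Disjoint A B → P (A ∪ B) = P A + P B) : P ∅ = 0 := by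
  have h := hadd ∅ ∅ disjoint_bot_left
  rwa [Set.union_self, left_eq_add] at h

theorem nonneg_of_additive_of_regular
    (hadd : ∀ A B : Set Ω, Disjoint A B → P (A ∪ B) = P A + P B)
    (hreg : ∀ A : Set Ω, A.Nonempty → 0 < P A) (A : Set Ω) : 0 ≤ P A := by
  rcases A.eq_empty_or_nonempty with rfl | hA
  · exact (empty_eq_zero_of_additive hadd).ge
  · exact (hreg A hA).le

theorem monotone_of_additive_of_regular
    (hadd : ∀ A B : Set Ω, Disjoint A B → P (A ∪ B) = P A + P B)
    (hreg : ∀ A : Set Ω, A.Nonempty → 0 < P A) : Monotone P := by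
  intro B A hBA
  have h := hadd B (A \ B) Set.disjoint_sdiff_right
  rw [Set.union_sdiff_cancel hBA] at h
  rw [h]
  exact le_add_of_nonneg_right (nonneg_of_additive_of_regular hadd hreg _)

end FinitelyAdditive

theorem stmt5_general {Ω : Type*} {K : Type*} [Field K] [LinearOrder K] [IsStrictOrderedRing K]
    (ι : ℝ →+* K) (hι : StrictMono ι)
    (P : Set Ω → K)
    (hadd : ∀ A B : Set Ω, Disjoint A B → P (A ∪ B) = P A + P B)
    (hreg : ∀ A : Set Ω, A.Nonempty → 0 < P A)
    (st : K → ℝ)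
    (hst : ∀ x : K, (∃ n : ℕ, |x| ≤ ι n) →
      ∀ m : ℕ, 0 < m → |x - ι (st x)| < ι (1 / m))
    (C : Set Ω → Set Ω → ℝ)
    (hC : ∀ A B : Set Ω, B.Nonempty → C A B = st (P (A ∩ B) / P B)) :
    ∀ A : Set Ω, A.Nonempty →
      (C A A = 1 ∧
       C Set.univ A = 1 ∧
       (∀ B : Set Ω, 0 ≤ C B A ∧ C B A ≤ 1) ∧
       (∀ B₁ B₂ : Set Ω, Disjoint B₁ B₂ → C (B₁ ∪ B₂) A = C B₁ A + C B₂ A)) := by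
  intro A hA
  have hPA : 0 < P A := hreg A hA
  have hx0 (B : Set Ω) : 0 ≤ P (B ∩ A) / P A :=
    div_nonneg (nonneg_of_additive_of_regular hadd hreg _) hPA.le
  have hx1 (B : Set Ω) : P (B ∩ A) / P A ≤ 1 :=
    (div_le_one hPA).mpr (monotone_of_additive_of_regular hadd hreg Set.inter_subset_right)
  have hstd (B : Set Ω) : IsStandardPart ι (P (B ∩ A) / P A) (C B A) := by
    refine hC B A hA ▸ isStandardPart_of_forall_nat hι.monotone (hst _ ⟨1, ?_⟩)
    rw [abs_of_nonneg (hx0 B), Nat.cast_one, map_one]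
    exact hx1 B
  have hone (B : Set Ω) (hAB : A ⊆ B) : C B A = 1 := by
    refine (hstd B).unique ?_
    rw [Set.inter_eq_right.mpr hAB, div_self hPA.ne', ← map_one ι]
    exact isStandardPart_map hι 1
  refine ⟨hone A subset_rfl, hone _ (Set.subset_univ A), fun B => ⟨?_, ?_⟩, ?_⟩
  · exact (isStandardPart_map hι 0).mono (hstd B) (by rw [map_zero]; exact hx0 B)
  · exact (hstd B).mono (isStandardPart_map hι 1) (by rw [map_one]; exact hx1 B)
  · intro B₁ B₂ hd
    have hsplit : P ((B₁ ∪ B₂) ∩ A) / P A = P (B₁ ∩ A) / P A + P (B₂ ∩ A) / P A := by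
      rw [Set.union_inter_distrib_right, ← add_div,
        hadd _ _ (hd.mono Set.inter_subset_left Set.inter_subset_left)]
    exact (hstd _).unique (hsplit ▸ (hstd B₁).add (hstd B₂))

/-- For a regular finitely additive non-Archimedean probability function `P`,
the function `C(B, A) = st(P(B ∩ A)/P(A))` satisfies `C(A, A) = 1` and, for each
nonempty `A`, `B ↦ C(B, A)` is a finitely additive probability measure with
values in `[0,1] ⊆ ℝ`. -/
theorem stmt5 {Ω : Type*} {K : Type*} [Field K] [LinearOrder K] [IsStrictOrderedRing K]
    (ι : ℝ →+* K) (hι : StrictMono ι)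
    (P : Set Ω → K)
    (hadd : ∀ A B : Set Ω, Disjoint A B → P (A ∪ B) = P A + P B)
    (hnorm : P Set.univ = 1)
    (hreg : ∀ A : Set Ω, A.Nonempty → 0 < P A)
    (st : K → ℝ)
    (hst : ∀ x : K, (∃ n : ℕ, |x| ≤ ι n) →
      ∀ m : ℕ, 0 < m → |x - ι (st x)| < ι (1 / m))
    (C : Set Ω → Set Ω → ℝ)
    (hC : ∀ A B : Set Ω, B.Nonempty → C A B = st (P (A ∩ B) / P B)) :
    ∀ A : Set Ω, A.Nonempty →
      (C A A = 1 ∧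
       C Set.univ A = 1 ∧
       (∀ B : Set Ω, 0 ≤ C B A ∧ C B A ≤ 1) ∧
       (∀ B₁ B₂ : Set Ω, Disjoint B₁ B₂ → C (B₁ ∪ B₂) A = C B₁ A + C B₂ A)) :=
  stmt5_general ι hι P hadd hreg st hst C hC
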